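/- The function f(x₁, x₂) = √(2 x₁ x₂) on ℝ²₊ is a self-dual antinorm: it is concave, positively homogeneous, nonnegative, and inf{y₁x₁ + y₂x₂ : x ∈ ℝ²₊, √(2x₁x₂) ≥ 1} = √(2 y₁ y₂) for every y ∈ ℝ²₊. -/

import Mathlib

/-- The nonnegative orthant in ℝ^d. -/
def orthant (d : ℕ) : Set (EuclideanSpace ℝ (Fin d)) := {x | ∀ i, 0 ≤ x i}

/-- An antinorm on ℝ^d₊: concave, positively homogeneous, nonnegative,
and positive somewhere. -/
def IsAntinorm {d : ℕ} (f : EuclideanSpace ℝ (Fin d) → ℝ) : Prop :=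
  ConcaveOn ℝ (orthant d) f ∧
  (∀ x ∈ orthant d, ∀ c : ℝ, 0 ≤ c → f (c • x) = c * f x) ∧
  (∀ x ∈ orthant d, 0 ≤ f x) ∧
  (∃ x ∈ orthant d, 0 < f x)

/-- The dual antinorm f*(y) = inf{(y,x) : x ∈ ℝ^d₊, f(x) ≥ 1}. -/
noncomputable def dualAntinorm {d : ℕ} (f : EuclideanSpace ℝ (Fin d) → ℝ)
    (y : EuclideanSpace ℝ (Fin d)) : ℝ :=
  sInf ((fun x => (inner ℝ y x : ℝ)) '' {x | x ∈ orthant d ∧ 1 ≤ f x})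

/-!
Everything rests on the AM–GM inequality in the form `√(2ab) · √(2cd) ≤ ad + bc` for
nonnegative `a, b, c, d`. Squaring turns concavity of `f(x) = √(2 x₀ x₁)` into this inequality,
and it also gives `f(y) ≤ f(y) f(x) ≤ ⟪y, x⟫` whenever `f(x) ≥ 1`, i.e. `f(y) ≤ f*(y)`.
Conversely the points `(t, 1/(2t))` lie on the level set `f = 1`, and choosing `t` near
`√(y₁ / (2 y₀))` makes `⟪y, x⟫` arbitrarily close to `f(y)`.
-/

section RealInequalities

variable {a b c d : ℝ}

lemma sqrt_two_mul_mul_sqrt_two_mul_le (ha : 0 ≤ a) (hb : 0 ≤ b) (hc : 0 ≤ c) (hd : 0 ≤ d) :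
    √(2 * a * b) * √(2 * c * d) ≤ a * d + b * c := by
  rw [← Real.sqrt_mul (by positivity), Real.sqrt_le_iff]
  refine ⟨by positivity, ?_⟩
  calc 2 * a * b * (2 * c * d) = 4 * (a * d) * (b * c) := by ring
    _ ≤ (a * d + b * c) ^ 2 := four_mul_le_sq_add _ _

lemma sqrt_two_mul_smul (hc : 0 ≤ c) : √(2 * (c * a) * (c * b)) = c * √(2 * a * b) := by
  rw [show 2 * (c * a) * (c * b) = c ^ 2 * (2 * a * b) by ring,
    Real.sqrt_mul (sq_nonneg c), Real.sqrt_sq hc]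

lemma exists_pos_mul_add_div_lt (ha : 0 ≤ a) (hb : 0 ≤ b) {ε : ℝ} (hε : 0 < ε) :
    ∃ t > 0, a * t + b / t < 2 * √(a * b) + ε := by
  set s := √a
  set r := √b
  have hs : 0 ≤ s := Real.sqrt_nonneg a
  have hr : 0 ≤ r := Real.sqrt_nonneg b
  -- perturb the minimiser `t = r / s` so that it is defined and positive even when `s r = 0`
  set η := ε / (s + r + 1)
  have hη : 0 < η := by positivity
  have hηε : η * (s + r) < ε := by
    rw [div_mul_eq_mul_div, div_lt_iff₀ (by positivity)]
    nlinarith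
  refine ⟨(r + η) / (s + η), by positivity, ?_⟩
  have hat : a * ((r + η) / (s + η)) ≤ s * (r + η) := by
    rw [← Real.sq_sqrt ha, mul_div_assoc', div_le_iff₀ (by positivity)]
    nlinarith [mul_nonneg hs (add_pos_of_nonneg_of_pos hr hη).le]
  have hbt : b / ((r + η) / (s + η)) ≤ r * (s + η) := by
    rw [← Real.sq_sqrt hb, div_div_eq_mul_div, div_le_iff₀ (by positivity)]
    nlinarith [mul_nonneg hr (add_pos_of_nonneg_of_pos hs hη).le]
  rw [Real.sqrt_mul ha]
  linarith

end RealInequalities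

lemma convex_orthant (d : ℕ) : Convex ℝ (orthant d) := by
  intro x hx y hy a b ha hb _ i
  have := hx i
  have := hy i
  simp only [PiLp.add_apply, PiLp.smul_apply, smul_eq_mul]
  positivity

lemma EuclideanSpace.inner_fin_two (y x : EuclideanSpace ℝ (Fin 2)) :
    inner ℝ y x = y 0 * x 0 + y 1 * x 1 := by
  simp [PiLp.inner_apply, Fin.sum_univ_two, mul_comm]

lemma concaveOn_sqrt_two_mul :
    ConcaveOn ℝ (orthant 2) (fun x : EuclideanSpace ℝ (Fin 2) => √(2 * x 0 * x 1)) := by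
  refine ⟨convex_orthant 2, fun x hx y hy a b ha hb _ => ?_⟩
  simp only [PiLp.add_apply, PiLp.smul_apply, smul_eq_mul]
  have hx0 := hx 0; have hx1 := hx 1; have hy0 := hy 0; have hy1 := hy 1
  apply Real.le_sqrt_of_sq_le
  calc (a * √(2 * x 0 * x 1) + b * √(2 * y 0 * y 1)) ^ 2
      = a ^ 2 * √(2 * x 0 * x 1) ^ 2 + 2 * (a * b) * (√(2 * x 0 * x 1) * √(2 * y 0 * y 1))
          + b ^ 2 * √(2 * y 0 * y 1) ^ 2 := by ring
    _ ≤ a ^ 2 * (2 * x 0 * x 1) + 2 * (a * b) * (x 0 * y 1 + x 1 * y 0)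
          + b ^ 2 * (2 * y 0 * y 1) := by
        rw [Real.sq_sqrt (by positivity), Real.sq_sqrt (by positivity)]
        gcongr
        exact sqrt_two_mul_mul_sqrt_two_mul_le hx0 hx1 hy0 hy1
    _ = 2 * (a * x 0 + b * y 0) * (a * x 1 + b * y 1) := by ring

lemma sqrt_two_mul_le_inner {x y : EuclideanSpace ℝ (Fin 2)} (hx : x ∈ orthant 2)
    (hy : y ∈ orthant 2) (hfx : 1 ≤ √(2 * x 0 * x 1)) :
    √(2 * y 0 * y 1) ≤ inner ℝ y x :=
  calc √(2 * y 0 * y 1) ≤ √(2 * y 0 * y 1) * √(2 * x 1 * x 0) := by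
        rw [mul_right_comm 2 (x 1)]
        exact le_mul_of_one_le_right (Real.sqrt_nonneg _) hfx
    _ ≤ y 0 * x 0 + y 1 * x 1 := sqrt_two_mul_mul_sqrt_two_mul_le (hy 0) (hy 1) (hx 1) (hx 0)
    _ = inner ℝ y x := (EuclideanSpace.inner_fin_two y x).symm

lemma dualAntinorm_sqrt_two_mul {y : EuclideanSpace ℝ (Fin 2)} (hy : y ∈ orthant 2) :
    dualAntinorm (fun x : EuclideanSpace ℝ (Fin 2) => √(2 * x 0 * x 1)) y =
      √(2 * y 0 * y 1) := by
  set S := (fun x => (inner ℝ y x : ℝ)) ''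
    {x : EuclideanSpace ℝ (Fin 2) | x ∈ orthant 2 ∧ 1 ≤ √(2 * x 0 * x 1)}
  have hlevel : ∀ t > (0 : ℝ), y 0 * t + y 1 / 2 / t ∈ S := fun t ht =>
    ⟨!₂[t, 1 / (2 * t)],
      ⟨fun i => by fin_cases i <;> simp [ht.le],
        by simp [mul_assoc, ht.ne']⟩,
      (EuclideanSpace.inner_fin_two _ _).trans (by simp; ring)⟩
  have hS : S.Nonempty := ⟨_, hlevel 1 one_pos⟩
  have hlower : ∀ z ∈ S, √(2 * y 0 * y 1) ≤ z := by
    rintro _ ⟨x, ⟨hx, hfx⟩, rfl⟩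
    exact sqrt_two_mul_le_inner hx hy hfx
  refine le_antisymm ((Real.sInf_le_iff ⟨_, hlower⟩ hS).2 fun ε hε => ?_) (le_csInf hS hlower)
  obtain ⟨t, ht, hlt⟩ := exists_pos_mul_add_div_lt (hy 0) (div_nonneg (hy 1) two_pos.le) hε
  refine ⟨_, hlevel t ht, hlt.trans_le (le_of_eq ?_)⟩
  rw [show 2 * y 0 * y 1 = 2 ^ 2 * (y 0 * (y 1 / 2)) by ring,
    Real.sqrt_mul (sq_nonneg 2), Real.sqrt_sq two_pos.le]

/-- f(x₁,x₂) = √(2x₁x₂) is a self-dual antinorm on ℝ²₊. -/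
theorem stmt_14 :
    ConcaveOn ℝ (orthant 2)
      (fun x : EuclideanSpace ℝ (Fin 2) => Real.sqrt (2 * x 0 * x 1)) ∧
    (∀ x ∈ orthant 2, ∀ c : ℝ, 0 ≤ c →
      Real.sqrt (2 * (c • x : EuclideanSpace ℝ (Fin 2)) 0 *
          (c • x : EuclideanSpace ℝ (Fin 2)) 1) =
        c * Real.sqrt (2 * x 0 * x 1)) ∧
    (∀ x ∈ orthant 2, 0 ≤ Real.sqrt (2 * x 0 * x 1)) ∧
    (∀ y ∈ orthant 2,
      dualAntinorm
        (fun x : EuclideanSpace ℝ (Fin 2) => Real.sqrt (2 * x 0 * x 1)) y =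
        Real.sqrt (2 * y 0 * y 1)) :=
  ⟨concaveOn_sqrt_two_mul, fun _ _ _ hc => sqrt_two_mul_smul hc,
    fun _ _ => Real.sqrt_nonneg _, fun _ hy => dualAntinorm_sqrt_two_mul hy⟩
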